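/- Let T be a transitive tournament with an even number n of vertices. Then det(S_T) = 1, where S_T is the skew-adjacency matrix of T. -/

import Mathlib

open scoped Classical

/-- A tournament: irreflexive, and between distinct vertices exactly one arc. -/
def IsTournament {V : Type*} (r : V → V → Prop) : Prop :=
  (∀ i, ¬ r i i) ∧ ∀ i j, i ≠ j → (r i j ↔ ¬ r j i)

/-- Skew-adjacency matrix of a relation. -/
noncomputable def skew {V : Type*} (r : V → V → Prop) : Matrix V V ℤ :=
  Matrix.of fun i j => if r i j then 1 else if r j i then -1 else 0

/-- Determinant of the skew-adjacency matrix. -/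
noncomputable def tdet {V : Type*} [Fintype V] [DecidableEq V] (r : V → V → Prop) : ℤ :=
  (skew r).det

/-- Determinant of the subtournament induced by a finite vertex subset. -/
noncomputable def subdet {V : Type*} [Fintype V] [DecidableEq V] (r : V → V → Prop)
    (s : Finset V) : ℤ :=
  ((skew r).submatrix (fun x : {x // x ∈ s} => x.1) (fun x : {x // x ∈ s} => x.1)).det

/-- Switch of `r` with respect to `W`: arcs between `W` and its complement are reversed. -/
def switchRel {V : Type*} (r : V → V → Prop) (W : Set V) : V → V → Prop :=
  fun i j => if (i ∈ W ↔ j ∈ W) then r i j else r j i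

/-- Switching equivalence of two tournaments on the same vertex set. -/
def SwitchEquiv {V : Type*} (r₁ r₂ : V → V → Prop) : Prop :=
  ∃ W : Set V, ∀ i j, r₂ i j ↔ switchRel r₁ W i j

def IsTransitive {V : Type*} (r : V → V → Prop) : Prop :=
  ∀ a b c, r a b → r b c → r a c

def IsTransitiveOn {V : Type*} (r : V → V → Prop) (X : Finset V) : Prop :=
  ∀ a ∈ X, ∀ b ∈ X, ∀ c ∈ X, r a b → r b c → r a c

/-- A 4-set inducing a diamond: a vertex dominating or dominated by a 3-cycle. -/
def IsDiamond {V : Type*} (r : V → V → Prop) (X : Finset V) : Prop :=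
  ∃ a b c d : V, X = {a, b, c, d} ∧ a ≠ b ∧ a ≠ c ∧ a ≠ d ∧ b ≠ c ∧ b ≠ d ∧ c ≠ d ∧
    r b c ∧ r c d ∧ r d b ∧ ((r a b ∧ r a c ∧ r a d) ∨ (r b a ∧ r c a ∧ r d a))

/-- Number of diamonds of a tournament. -/
noncomputable def numDiamonds {V : Type*} [Fintype V] (r : V → V → Prop) : ℕ :=
  Set.ncard {X : Finset V | IsDiamond r X}

/-- The tournament `L_n`: a transitive chain `u_0 → ⋯ → u_{n-2}` together with a last
vertex alternating along the chain, starting with `u_{n-1} → u_0`. -/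
def LRel (n : ℕ) : Fin n → Fin n → Prop := fun i j =>
  (j.val < n - 1 ∧ i.val < j.val) ∨
  (j.val = n - 1 ∧ i.val < n - 1 ∧ i.val % 2 = 1) ∨
  (i.val = n - 1 ∧ j.val < n - 1 ∧ j.val % 2 = 0)

/-- Join of two tournaments: all arcs from the first to the second. -/
def joinRel {A B : Type*} (r : A → A → Prop) (s : B → B → Prop) : A ⊕ B → A ⊕ B → Prop :=
  fun x y => match x, y with
  | .inl a, .inl a' => r a a'
  | .inr b, .inr b' => s b b'
  | .inl _, .inr _ => True
  | .inr _, .inl _ => False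

/-- `T⁺`: add one new vertex dominated by every vertex of `T`. -/
def plusRel {A : Type*} (r : A → A → Prop) : Option A → Option A → Prop :=
  fun x y => match x, y with
  | some a, some b => r a b
  | some _, none => True
  | _, _ => False

/-- Blowup of `r` by the family of tournaments `t`. -/
def blowupG {ι : Type*} [DecidableEq ι] (r : ι → ι → Prop) {κ : ι → Type*}
    (t : ∀ i, κ i → κ i → Prop) : (Σ i, κ i) → (Σ i, κ i) → Prop :=
  fun x y => if h : x.1 = y.1 then t y.1 (h ▸ x.2) y.2 else r x.1 y.1

/-- Transitive `(a_1,…,a_n)`-blowup of `r`. -/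
def blowup {ι : Type*} [DecidableEq ι] (r : ι → ι → Prop) (a : ι → ℕ) :
    (Σ i, Fin (a i)) → (Σ i, Fin (a i)) → Prop :=
  blowupG r (fun _ p q => p < q)

/-- Membership in `𝒟_k`: every subtournament has determinant at most `k²`. -/
def memD {V : Type*} [Fintype V] [DecidableEq V] (r : V → V → Prop) (k : ℕ) : Prop :=
  ∀ s : Finset V, subdet r s ≤ (k : ℤ) ^ 2

/-!
The order of a transitive tournament identifies it with `(Fin n, <)`, whose first two vertices
dominate the rest. Splitting them off writes the skew-adjacency matrix in blocks
`[[A, 1], [-1, D]]` with `A` the unimodular `2 × 2` skew matrix; the Schur complement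
`D - (-1) A⁻¹ 1` equals `D` because `A⁻¹` is again skew-symmetric, so its entries sum to `0`.
Hence the determinant does not change when two vertices are removed, and it is `1` for
even `n`.
-/

open Matrix

lemma skew_joinRel {A B : Type*} (r : A → A → Prop) (s : B → B → Prop) :
    skew (joinRel r s) = fromBlocks (skew r) (of fun _ _ => 1) (of fun _ _ => -1) (skew s) := by
  ext (a | b) (a' | b') <;> simp [skew, joinRel] <;> rfl

lemma transpose_skew {V : Type*} {r : V → V → Prop} (hr : ∀ a b, r a b → ¬ r b a) :
    (skew r)ᵀ = -skew r := by
  ext i j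
  by_cases hij : r i j <;> by_cases hji : r j i <;> simp_all [skew]

lemma sum_sum_eq_zero_of_transpose_eq_neg {n : Type*} [Fintype n] {N : Matrix n n ℤ}
    (hN : Nᵀ = -N) : ∑ i, ∑ j, N i j = 0 := by
  have h : ∑ i, ∑ j, N i j = -∑ i, ∑ j, N i j :=
    calc _ = ∑ j, ∑ i, Nᵀ j i := Finset.sum_comm
      _ = _ := by simp only [hN, neg_apply, Finset.sum_neg_distrib]
  omega

lemma transpose_invOf_eq_neg {n : Type*} [Fintype n] [DecidableEq n] {A : Matrix n n ℤ}
    [Invertible A] (hA : Aᵀ = -A) : (⅟A)ᵀ = -⅟A := by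
  have : (-(⅟A)ᵀ) * A = 1 := by
    rw [Matrix.neg_mul, ← Matrix.mul_neg, ← hA, ← transpose_mul, mul_invOf_self, transpose_one]
  nth_rw 2 [invOf_eq_left_inv this]
  rw [neg_neg]

lemma det_skew_joinRel {A B : Type*} [Fintype A] [DecidableEq A] [Fintype B] [DecidableEq B]
    {r : A → A → Prop} (s : B → B → Prop) (hr : ∀ a b, r a b → ¬ r b a) [Invertible (skew r)] :
    (skew (joinRel r s)).det = (skew r).det * (skew s).det := by
  have hsum := sum_sum_eq_zero_of_transpose_eq_neg (transpose_invOf_eq_neg (transpose_skew hr))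
  have hschur :
      (of fun _ _ => -1 : Matrix B A ℤ) * ⅟(skew r) * (of fun _ _ => 1 : Matrix A B ℤ) = 0 := by
    ext i j
    simp only [mul_apply, of_apply, neg_one_mul, mul_one, Finset.sum_neg_distrib,
      Matrix.zero_apply]
    rw [Finset.sum_comm, hsum, neg_zero]
  rw [skew_joinRel, det_fromBlocks₁₁, hschur, sub_zero]

lemma det_skew_of_relIso {V W : Type*} [Fintype V] [DecidableEq V] [Fintype W] [DecidableEq W]
    {r : V → V → Prop} {r' : W → W → Prop} (e : r' ≃r r) : (skew r').det = (skew r).det := by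
  have hr' : r' = fun a b => r (e a) (e b) := funext₂ fun a b => propext e.map_rel_iff.symm
  rw [hr']
  exact det_submatrix_equiv_self e.toEquiv (skew r)

lemma IsTournament.isStrictTotalOrder {V : Type*} {r : V → V → Prop} (hT : IsTournament r)
    (htr : IsTransitive r) : IsStrictTotalOrder V r where
  irrefl := hT.1
  trans := htr
  trichotomous a b hab hba := by_contra fun h => hab ((hT.2 a b h).mpr hba)

lemma nonempty_relIso_fin_lt {V : Type*} [Fintype V] {r : V → V → Prop}
    [IsStrictTotalOrder V r] {n : ℕ} (h : Fintype.card V = n) :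
    Nonempty ((· < · : Fin n → _ → Prop) ≃r r) :=
  letI := linearOrderOfSTO r
  ⟨(monoEquivOfFin V h).toRelIsoLT⟩

def joinRelFinLtIso (m n : ℕ) : joinRel (· < · : Fin m → _ → Prop) (· < · : Fin n → _ → Prop) ≃r
    (· < · : Fin (m + n) → _ → Prop) where
  toEquiv := finSumFinEquiv
  map_rel_iff' {a b} := by
    rcases a with a | a <;> rcases b with b | b <;>
      simp only [joinRel, finSumFinEquiv_apply_left, finSumFinEquiv_apply_right, Fin.lt_def,
        Fin.val_castAdd, Fin.val_natAdd] <;> grind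

lemma det_skew_fin_lt_two_mul (k : ℕ) : (skew (· < · : Fin (2 * k) → _ → Prop)).det = 1 := by
  induction k with
  | zero => exact det_fin_zero
  | succ k ih =>
    have h2 : (skew (· < · : Fin 2 → _ → Prop)).det = 1 := by simp [det_fin_two, skew]
    have := invertibleOfIsUnitDet _ (h2 ▸ isUnit_one)
    rw [show 2 * (k + 1) = 2 + 2 * k by ring, ← det_skew_of_relIso (joinRelFinLtIso 2 (2 * k)),
      det_skew_joinRel _ fun _ _ => lt_asymm, h2, ih, one_mul]

theorem stmt1 {V : Type*} [Fintype V] [DecidableEq V] (r : V → V → Prop)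
    (hT : IsTournament r) (htr : IsTransitive r) (hn : Even (Fintype.card V)) :
    tdet r = 1 := by
  have := hT.isStrictTotalOrder htr
  obtain ⟨k, hk⟩ := hn
  obtain ⟨e⟩ := nonempty_relIso_fin_lt (r := r) (hk.trans (two_mul k).symm)
  rw [tdet, ← det_skew_of_relIso e, det_skew_fin_lt_two_mul]
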